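/- (Lemma 2) Let Γ₁ ⊆ Γ₂ be finite convex subsets of ℤ² and let A be any abelian group. Then the restriction homomorphism H_A(Γ₂) → H_A(Γ₁), sending an A-valued harmonic function on Γ₂ to its restriction to Γ₁, is well defined (the restriction of a harmonic function is harmonic) and surjective. -/

import Mathlib

/-- The interior of `Γ ⊆ ℤ²`: points of `Γ` all four of whose lattice neighbors
also lie in `Γ`. -/
def latInterior (Γ : Set (ℤ × ℤ)) : Set (ℤ × ℤ) :=
  {v | v ∈ Γ ∧ (v.1 + 1, v.2) ∈ Γ ∧ (v.1 - 1, v.2) ∈ Γ ∧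
       (v.1, v.2 + 1) ∈ Γ ∧ (v.1, v.2 - 1) ∈ Γ}

/-- An `A`-valued function on `Γ ⊆ ℤ²` is harmonic if the discrete Laplace
equation `4·f(v) = Σ_{w nbr of v} f(w)` holds at every interior point of `Γ`. -/
def IsHarmonicOn {A : Type} [AddCommGroup A] (Γ : Set (ℤ × ℤ)) (f : Γ → A) : Prop :=
  ∀ v, ∀ h : v ∈ latInterior Γ,
    (4 : ℤ) • f ⟨v, h.1⟩ =
      f ⟨(v.1 + 1, v.2), h.2.1⟩ + f ⟨(v.1 - 1, v.2), h.2.2.1⟩ +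
      f ⟨(v.1, v.2 + 1), h.2.2.2.1⟩ + f ⟨(v.1, v.2 - 1), h.2.2.2.2⟩

/-- `Γ ⊆ ℤ²` is convex if it is the set of lattice points of a convex subset of `ℝ²`. -/
def LatticeConvex (Γ : Set (ℤ × ℤ)) : Prop :=
  ∃ C : Set (ℝ × ℝ), Convex ℝ C ∧ Γ = {v : ℤ × ℤ | ((v.1 : ℝ), (v.2 : ℝ)) ∈ C}

/-!
Restriction preserves harmonicity since interior points of `Γ₁` are interior points of `Γ₂`.
For surjectivity, shrink `Γ₂` to `Γ₁` one point at a time: as long as `Γ₁ ≠ Γ₂`, some extreme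
point of the convex hull of `Γ₂` lies outside `Γ₁` (Krein–Milman), and removing it leaves a
lattice-convex set. So it suffices to extend a harmonic function from a midpoint-closed set `Γ`
to `insert v Γ`. There `v` is not an interior point, and at most one point, a neighbour of `v`,
becomes newly interior; the value at `v` is chosen to restore the Laplace equation there.
-/

def latDirs : Finset (ℤ × ℤ) := {(1, 0), (-1, 0), (0, 1), (0, -1)}

lemma mem_latInterior_iff {Γ : Set (ℤ × ℤ)} {v : ℤ × ℤ} :
    v ∈ latInterior Γ ↔ v ∈ Γ ∧ ∀ e ∈ latDirs, v + e ∈ Γ := by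
  obtain ⟨a, b⟩ := v
  simp only [latInterior, latDirs, Finset.mem_insert, Finset.mem_singleton, forall_eq_or_imp,
    forall_eq, Prod.mk_add_mk, add_zero, sub_eq_add_neg, Set.mem_ofPred_eq]

lemma latInterior_mono {Γ Δ : Set (ℤ × ℤ)} (h : Γ ⊆ Δ) : latInterior Γ ⊆ latInterior Δ :=
  fun _ hv => ⟨h hv.1, h hv.2.1, h hv.2.2.1, h hv.2.2.2.1, h hv.2.2.2.2⟩

section

variable {A : Type*} [AddCommGroup A]

def HarmonicAt (F : ℤ × ℤ → A) (v : ℤ × ℤ) : Prop :=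
  (4 : ℤ) • F v = ∑ e ∈ latDirs, F (v + e)

lemma HarmonicAt.congr {Γ : Set (ℤ × ℤ)} {F G : ℤ × ℤ → A} {v : ℤ × ℤ} (hG : HarmonicAt G v)
    (hFG : Set.EqOn F G Γ) (hv : v ∈ latInterior Γ) : HarmonicAt F v := by
  rw [mem_latInterior_iff] at hv
  unfold HarmonicAt
  rw [hFG hv.1, Finset.sum_congr rfl fun e he => hFG (hv.2 e he)]
  exact hG

end

def MidpointClosed (Γ : Set (ℤ × ℤ)) : Prop :=
  ∀ a ∈ Γ, ∀ b ∈ Γ, ∀ c, a + b = c + c → c ∈ Γ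

namespace MidpointClosed

variable {Γ : Set (ℤ × ℤ)} {v : ℤ × ℤ}

lemma notMem_latInterior_insert (hΓ : MidpointClosed Γ) (hv : v ∉ Γ) :
    v ∉ latInterior (insert v Γ) := by
  intro hint
  have hmem : ∀ e ∈ latDirs, e ≠ 0 → v + e ∈ Γ := fun e he he0 =>
    ((mem_latInterior_iff.1 hint).2 e he).resolve_left (by simpa using he0)
  exact hv <| hΓ _ (hmem (1, 0) (by decide) (by decide)) _ (hmem (-(1, 0)) (by decide) (by decide))
    v (by abel)

lemma exists_add_eq_of_mem_latInterior_insert (hΓ : MidpointClosed Γ) (hv : v ∉ Γ) {p : ℤ × ℤ}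
    (hp : p ∈ latInterior (insert v Γ)) (hp' : p ∉ latInterior Γ) :
    ∃ e ∈ latDirs, p + e = v := by
  have hpv : p ≠ v := by rintro rfl; exact hΓ.notMem_latInterior_insert hv hp
  rw [mem_latInterior_iff] at hp hp'
  have hpΓ : p ∈ Γ := hp.1.resolve_left hpv
  push Not at hp'
  obtain ⟨e, he, hpe⟩ := hp' hpΓ
  exact ⟨e, he, (hp.2 e he).resolve_right hpe⟩

/-- Two new interior points `p = v - e`, `q = v - e'` with `e ≠ e'` would give the points
`p + e'` and `q + e` of `Γ`, whose midpoint is `v`. -/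
lemma eq_of_mem_latInterior_insert (hΓ : MidpointClosed Γ) (hv : v ∉ Γ) {p q : ℤ × ℤ}
    (hp : p ∈ latInterior (insert v Γ)) (hp' : p ∉ latInterior Γ)
    (hq : q ∈ latInterior (insert v Γ)) (hq' : q ∉ latInterior Γ) : p = q := by
  obtain ⟨e, he, hpv⟩ := hΓ.exists_add_eq_of_mem_latInterior_insert hv hp hp'
  obtain ⟨e', he', hqv⟩ := hΓ.exists_add_eq_of_mem_latInterior_insert hv hq hq'
  by_cases hee' : e = e'
  · subst hee'
    exact add_right_cancel (hpv.trans hqv.symm)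
  have hpe' : p + e' ∈ Γ := ((mem_latInterior_iff.1 hp).2 e' he').resolve_left
    fun h => hee' (add_left_cancel (hpv.trans h.symm))
  have hqe : q + e ∈ Γ := ((mem_latInterior_iff.1 hq).2 e he).resolve_left
    fun h => hee' (add_left_cancel (h.trans hqv.symm))
  have hmid : p + e' + (q + e) = v + v := calc
    p + e' + (q + e) = p + e + (q + e') := by abel
    _ = v + v := by rw [hpv, hqv]
  exact absurd (hΓ _ hpe' _ hqe _ hmid) hv

variable {A : Type*} [AddCommGroup A]

theorem exists_harmonicAt_insert (hΓ : MidpointClosed Γ) (hv : v ∉ Γ) (G : ℤ × ℤ → A)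
    (hG : ∀ p ∈ latInterior Γ, HarmonicAt G p) :
    ∃ F : ℤ × ℤ → A, (∀ p ∈ latInterior (insert v Γ), HarmonicAt F p) ∧ Set.EqOn F G Γ := by
  by_cases hnew : ∃ p ∈ latInterior (insert v Γ), p ∉ latInterior Γ
  swap
  · push Not at hnew
    exact ⟨G, fun p hp => hG p (hnew p hp), Set.eqOn_refl G Γ⟩
  obtain ⟨p, hp, hp'⟩ := hnew
  obtain ⟨e₀, he₀, hpv⟩ := hΓ.exists_add_eq_of_mem_latInterior_insert hv hp hp'
  -- correct `G` at `v` by the defect of the Laplace equation at the unique new interior point `p`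
  set c := (4 : ℤ) • G p - ∑ e ∈ latDirs, G (p + e)
  have hFG : Set.EqOn (G + Pi.single v c) G Γ := fun x hx => by
    simp [Pi.single_eq_of_ne (ne_of_mem_of_not_mem hx hv)]
  refine ⟨G + Pi.single v c, fun q hq => ?_, hFG⟩
  by_cases hq' : q ∈ latInterior Γ
  · exact (hG q hq').congr hFG hq'
  obtain rfl := hΓ.eq_of_mem_latInterior_insert hv hp hp' hq hq'
  have hsingle : ∑ e ∈ latDirs, (Pi.single v c : ℤ × ℤ → A) (p + e) = c := by
    rw [Finset.sum_eq_single_of_mem e₀ he₀ fun e _ he => ?_, hpv, Pi.single_eq_same]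
    exact Pi.single_eq_of_ne (fun h => he (add_left_cancel (h.trans hpv.symm))) _
  have hpv' : p ≠ v := fun h => hΓ.notMem_latInterior_insert hv (h ▸ hp)
  simp only [HarmonicAt, Pi.add_apply, Finset.sum_add_distrib, hsingle, Pi.single_eq_of_ne hpv',
    add_zero, c]
  abel

end MidpointClosed

def toPlane (v : ℤ × ℤ) : ℝ × ℝ := ((v.1 : ℝ), (v.2 : ℝ))

lemma toPlane_injective : Function.Injective toPlane := fun a b h => by
  simpa [toPlane, Prod.ext_iff] using h

lemma toPlane_add (a b : ℤ × ℤ) : toPlane (a + b) = toPlane a + toPlane b := by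
  simp [toPlane]

namespace LatticeConvex

variable {Γ Γ₁ Γ₂ : Set (ℤ × ℤ)}

lemma preimage_convexHull (h : LatticeConvex Γ) :
    toPlane ⁻¹' convexHull ℝ (toPlane '' Γ) = Γ := by
  refine Set.Subset.antisymm ?_ fun v hv => subset_convexHull ℝ _ (Set.mem_image_of_mem _ hv)
  obtain ⟨C, hC, rfl⟩ := h
  exact Set.preimage_mono (convexHull_min (Set.image_preimage_subset toPlane C) hC)

lemma midpointClosed (h : LatticeConvex Γ) : MidpointClosed Γ := by
  obtain ⟨C, hC, rfl⟩ := h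
  intro a ha b hb c habc
  have hc : (1 / 2 : ℝ) • toPlane a + (1 / 2 : ℝ) • toPlane b = toPlane c := by
    rw [← smul_add, ← toPlane_add, habc, toPlane_add, ← two_smul ℝ, smul_smul]
    norm_num
  change toPlane c ∈ C
  rw [← hc]
  exact hC ha hb (by norm_num) (by norm_num) (by norm_num)

/-- If every extreme point of the polygon spanned by `Γ₂` lay in `Γ₁`, then by Krein–Milman
this polygon would lie in the hull of `Γ₁`, forcing `Γ₂ ⊆ Γ₁`. -/
theorem exists_latticeConvex_sdiff_singleton (h₁ : LatticeConvex Γ₁) (h₂ : LatticeConvex Γ₂)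
    (hsub : Γ₁ ⊆ Γ₂) (hfin : Γ₂.Finite) (hne : Γ₁ ≠ Γ₂) :
    ∃ v ∈ Γ₂ \ Γ₁, LatticeConvex (Γ₂ \ {v}) := by
  set K := convexHull ℝ (toPlane '' Γ₂)
  obtain ⟨x, hxK, hx₁⟩ : ∃ x ∈ K.extremePoints ℝ, x ∉ toPlane '' Γ₁ := by
    by_contra! hext
    have hfinext : (K.extremePoints ℝ).Finite :=
      (hfin.image toPlane).subset extremePoints_convexHull_subset
    have hK : K ⊆ convexHull ℝ (toPlane '' Γ₁) := calc
      K = closure (convexHull ℝ (K.extremePoints ℝ)) := (closure_convexHull_extremePoints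
          ((hfin.image toPlane).isCompact_convexHull ℝ) (convex_convexHull ℝ _)).symm
      _ = convexHull ℝ (K.extremePoints ℝ) := (hfinext.isCompact_convexHull ℝ).isClosed.closure_eq
      _ ⊆ convexHull ℝ (toPlane '' Γ₁) := convexHull_mono hext
    refine hne (hsub.antisymm ?_)
    calc Γ₂ = toPlane ⁻¹' K := h₂.preimage_convexHull.symm
      _ ⊆ toPlane ⁻¹' convexHull ℝ (toPlane '' Γ₁) := Set.preimage_mono hK
      _ = Γ₁ := h₁.preimage_convexHull
  obtain ⟨v, hv, rfl⟩ := extremePoints_convexHull_subset hxK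
  refine ⟨v, ⟨hv, fun h => hx₁ (Set.mem_image_of_mem _ h)⟩, K \ {toPlane v},
    ((convex_convexHull ℝ _).mem_extremePoints_iff_convex_sdiff.1 hxK).2, ?_⟩
  change Γ₂ \ {v} = toPlane ⁻¹' (K \ {toPlane v})
  rw [Set.preimage_sdiff, h₂.preimage_convexHull, ← Set.image_singleton,
    toPlane_injective.preimage_image]

theorem exists_harmonicAt_extension {A : Type*} [AddCommGroup A] (h₁ : LatticeConvex Γ₁)
    (h₂ : LatticeConvex Γ₂) (hsub : Γ₁ ⊆ Γ₂) (hfin : Γ₂.Finite) (G : ℤ × ℤ → A)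
    (hG : ∀ p ∈ latInterior Γ₁, HarmonicAt G p) :
    ∃ F : ℤ × ℤ → A, (∀ p ∈ latInterior Γ₂, HarmonicAt F p) ∧ Set.EqOn F G Γ₁ := by
  obtain ⟨n, hn⟩ : ∃ n, (Γ₂ \ Γ₁).ncard = n := ⟨_, rfl⟩
  induction n generalizing Γ₂ with
  | zero =>
    obtain rfl : Γ₂ = Γ₁ :=
      (Set.sdiff_eq_empty.1 ((Set.ncard_eq_zero hfin.sdiff).1 hn)).antisymm hsub
    exact ⟨G, hG, Set.eqOn_refl G Γ₂⟩
  | succ n ih =>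
    obtain ⟨v, hv, hconv⟩ :=
      h₁.exists_latticeConvex_sdiff_singleton h₂ hsub hfin (by rintro rfl; simp at hn)
    have hcard : ((Γ₂ \ {v}) \ Γ₁).ncard = n := by
      rw [Set.sdiff_sdiff_comm, Set.ncard_sdiff_singleton_of_mem hv, hn, Nat.add_sub_cancel]
    obtain ⟨F', hF', hF'G⟩ :=
      ih hconv (Set.subset_sdiff_singleton hsub hv.2) hfin.sdiff hcard
    obtain ⟨F, hF, hFF'⟩ :=
      hconv.midpointClosed.exists_harmonicAt_insert (fun h => h.2 rfl) F' hF'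
    rw [Set.insert_sdiff_singleton, Set.insert_eq_of_mem hv.1] at hF
    exact ⟨F, hF, fun x hx => (hFF' ⟨hsub hx, fun h => hv.2 (h ▸ hx)⟩).trans (hF'G hx)⟩

end LatticeConvex

lemma isHarmonicOn_iff_harmonicAt {A : Type} [AddCommGroup A] {Γ : Set (ℤ × ℤ)} (F : ℤ × ℤ → A) :
    IsHarmonicOn Γ (fun v : Γ => F v) ↔ ∀ v ∈ latInterior Γ, HarmonicAt F v := by
  have hsum : ∀ v : ℤ × ℤ, ∑ e ∈ latDirs, F (v + e) =
      F (v.1 + 1, v.2) + F (v.1 - 1, v.2) + F (v.1, v.2 + 1) + F (v.1, v.2 - 1) := by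
    rintro ⟨a, b⟩
    simp [latDirs, sub_eq_add_neg, add_assoc]
  simp only [IsHarmonicOn, HarmonicAt, hsum]

theorem restriction_of_harmonic_wellDefined_and_surjective
    (A : Type) [AddCommGroup A] (Γ₁ Γ₂ : Set (ℤ × ℤ)) (hsub : Γ₁ ⊆ Γ₂)
    (hfin₂ : Γ₂.Finite)
    (hconv₁ : LatticeConvex Γ₁) (hconv₂ : LatticeConvex Γ₂) :
    (∀ f : Γ₂ → A, IsHarmonicOn Γ₂ f →
      IsHarmonicOn Γ₁ (fun v : Γ₁ => f ⟨v.1, hsub v.2⟩)) ∧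
    (∀ g : Γ₁ → A, IsHarmonicOn Γ₁ g →
      ∃ f : Γ₂ → A, IsHarmonicOn Γ₂ f ∧
        (fun v : Γ₁ => f ⟨v.1, hsub v.2⟩) = g) := by
  refine ⟨fun f hf p hp => hf p (latInterior_mono hsub hp), fun g hg => ?_⟩
  obtain ⟨G, rfl⟩ := Subtype.val_injective.surjective_comp_right (γ := A) g
  obtain ⟨F, hF, hFG⟩ :=
    hconv₁.exists_harmonicAt_extension hconv₂ hsub hfin₂ G ((isHarmonicOn_iff_harmonicAt G).1 hg)
  exact ⟨fun v => F v, (isHarmonicOn_iff_harmonicAt F).2 hF, funext fun v => hFG v.2⟩
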